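/- Let k ≥ ℓ ≥ 2, n ≥ k + ℓ, with k = ℓ allowed only together with the hypothesis below. Suppose F ⊆ C([n],k) and G ⊆ C([n],ℓ) are shifted cross-intersecting families such that p(G) > 0 for all G ∈ G, where p(G) is the maximal p ≥ 0 with |G ∩ [2p + k − ℓ]| ≥ p. Define φ(G) = G Δ [2p(G) + k − ℓ]. Then: (i) |φ(G)| = k for each G ∈ G; (ii) φ is injective on G and φ(G) ∉ F for every G ∈ G. -/

import Mathlib

/-- The shifting partial order on finite sets of naturals. -/
def prec (A B : Finset ℕ) : Prop :=
  A.card = B.card ∧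
    ∀ i < A.card, (A.sort (· ≤ ·)).getD i 0 ≤ (B.sort (· ≤ ·)).getD i 0

/-- A family of r-subsets of [n] is shifted (initial). -/
def IsShifted (n r : ℕ) (F : Finset (Finset ℕ)) : Prop :=
  ∀ A ∈ (Finset.Icc 1 n).powersetCard r, ∀ B ∈ F, prec A B → A ∈ F

/-- p(G): the maximal p with |G ∩ [2p + k − ℓ]| ≥ p. -/
def pval (k l : ℕ) (G : Finset ℕ) : ℕ :=
  (Finset.range (l + 1)).sup
    (fun p => if p ≤ (G ∩ Finset.Icc 1 (2 * p + k - l)).card then p else 0)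

/-- φ(G) = G Δ [2p(G) + k − ℓ]. -/
def phi (k l : ℕ) (G : Finset ℕ) : Finset ℕ :=
  symmDiff G (Finset.Icc 1 (2 * pval k l G + k - l))

/-!
Write `p = p(G)` and `m = 2p + k - ℓ`. Maximality of `p` forces `|G ∩ [m]| = p` exactly, so
`|φ(G)| = |G| + m - 2p = k`. If `φ(G₁) = φ(G₂)` with `p(G₁) < p(G₂)`, then `G₂` is `G₁` with the
interval `(m₁, m₂]` flipped, and counting gives `G₂` more than `p(G₂)` points in `[m₂]`.

Maximality of `p` also says that `G` holds at most half of the points of any interval `(m, u]`.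
Hence replacing `G \ [m]` by the first `ℓ - p` points of `(m, n] \ G` (there are enough because
`n ≥ k + ℓ`) gives a set `G' ≼ G`, so `G' ∈ 𝒢` by shiftedness; but `G'` misses
`φ(G) = ([m] \ G) ∪ (G \ [m])`, so `φ(G) ∉ 𝓕` by cross-intersection.
-/

open Finset

lemma Finset.card_symmDiff_add_two_mul_card_inter {α : Type*} [DecidableEq α] (s t : Finset α) :
    #(symmDiff s t) + 2 * #(s ∩ t) = #s + #t := by
  rw [symmDiff_eq_sup_sdiff_inf, sup_eq_union, inf_eq_inter,
    card_sdiff_of_subset inter_subset_union, ← card_union_add_card_inter]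
  have := card_le_card (inter_subset_union (s := s) (t := t))
  omega

lemma card_inter_Icc_add_card_inter_Ioc (B : Finset ℕ) {a b : ℕ} (hab : a ≤ b) :
    #(B ∩ Icc 1 a) + #(B ∩ Ioc a b) = #(B ∩ Icc 1 b) := by
  rw [← card_union_of_disjoint (disjoint_left.mpr fun x hx hx' => by
    simp only [mem_inter, mem_Icc, mem_Ioc] at hx hx'; omega), ← inter_union_distrib_left]
  congr 2
  ext x
  simp only [mem_union, mem_Icc, mem_Ioc]
  omega

lemma exists_card_Ioc_sdiff_eq (B : Finset ℕ) {a b r : ℕ} (hab : a ≤ b)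
    (hr : r ≤ #(Ioc a b \ B)) : ∃ s ≤ b, #(Ioc a s \ B) = r := by
  induction b, hab using Nat.le_induction with
  | base => exact ⟨a, le_rfl, by simpa [eq_comm] using hr⟩
  | succ b hab ih =>
    by_cases hrb : r ≤ #(Ioc a b \ B)
    · obtain ⟨s, hsb, hs⟩ := ih hrb
      exact ⟨s, hsb.trans b.le_succ, hs⟩
    · refine ⟨b + 1, le_rfl, ?_⟩
      have hstep : Ioc a (b + 1) \ B ⊆ insert (b + 1) (Ioc a b \ B) := by
        intro x
        simp only [mem_sdiff, mem_Ioc, mem_insert]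
        grind
      have := (card_le_card hstep).trans (card_insert_le _ _)
      omega

lemma orderEmbOfFin_le_iff_lt_card_filter {α : Type*} [LinearOrder α] {s : Finset α} {r : ℕ}
    (h : #s = r) (i : Fin r) (x : α) : s.orderEmbOfFin h i ≤ x ↔ (i : ℕ) < #{y ∈ s | y ≤ x} := by
  set f := s.orderEmbOfFin h
  have hcount : #{y ∈ s | y ≤ x} = #(univ.filter fun j => f j ≤ x) := by
    conv_lhs => rw [← map_orderEmbOfFin_univ s h, filter_map, card_map]
    rfl
  rw [hcount]
  constructor
  · intro hi
    have hsub : Iic i ⊆ univ.filter fun j => f j ≤ x := fun j hj =>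
      mem_filter.mpr ⟨mem_univ _, (f.monotone (mem_Iic.mp hj)).trans hi⟩
    simpa using card_le_card hsub
  · intro hi
    by_contra hx
    have hsub : (univ.filter fun j => f j ≤ x) ⊆ Iio i := fun j hj =>
      mem_Iio.mpr (lt_of_not_ge fun hij => hx ((f.monotone hij).trans (mem_filter.mp hj).2))
    simpa using (card_le_card hsub).trans_lt' hi

lemma prec_of_card_filter_le {A B : Finset ℕ} (hcard : #A = #B)
    (h : ∀ t, #{x ∈ B | x ≤ t} ≤ #{x ∈ A | x ≤ t}) : prec A B := by
  refine ⟨hcard, fun i hi => ?_⟩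
  have hiB : i < #B := hcard ▸ hi
  rw [List.getD_eq_getElem _ _ (by simpa using hi),
    List.getD_eq_getElem _ _ (by simpa using hiB)]
  change A.orderEmbOfFin rfl ⟨i, hi⟩ ≤ B.orderEmbOfFin rfl ⟨i, hiB⟩
  rw [orderEmbOfFin_le_iff_lt_card_filter]
  exact ((orderEmbOfFin_le_iff_lt_card_filter rfl ⟨i, hiB⟩ _).mp le_rfl).trans_le (h _)

section pval

variable {k l q : ℕ} {B : Finset ℕ}

lemma pval_le (k l : ℕ) (B : Finset ℕ) : pval k l B ≤ l :=
  Finset.sup_le fun p hp => by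
    rw [mem_range] at hp
    split <;> omega

lemma le_pval (hq : q ≤ l) (h : q ≤ #(B ∩ Icc 1 (2 * q + k - l))) : q ≤ pval k l B :=
  (if_pos h).symm.le.trans
    (le_sup (f := fun p => if p ≤ #(B ∩ Icc 1 (2 * p + k - l)) then p else 0)
      (mem_range.mpr (Nat.lt_succ_of_le hq)))

lemma card_inter_lt_of_pval_lt (hq : q ≤ l) (h : pval k l B < q) :
    #(B ∩ Icc 1 (2 * q + k - l)) < q :=
  lt_of_not_ge fun h' => h.not_ge (le_pval hq h')

lemma pval_le_card_inter : pval k l B ≤ #(B ∩ Icc 1 (2 * pval k l B + k - l)) := by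
  obtain ⟨q, -, hq⟩ :=
    exists_mem_eq_sup (range (l + 1)) (nonempty_range_iff.mpr l.succ_ne_zero) fun p =>
      if p ≤ #(B ∩ Icc 1 (2 * p + k - l)) then p else 0
  rw [pval, hq]
  split_ifs with h <;> simp [h]

lemma card_inter_pval (hB : #B = l) : #(B ∩ Icc 1 (2 * pval k l B + k - l)) = pval k l B := by
  refine le_antisymm ?_ pval_le_card_inter
  by_contra! hlt
  rcases (pval_le k l B).eq_or_lt with heq | hlt'
  · have := card_le_card (inter_subset_left (s₁ := B) (s₂ := Icc 1 (2 * pval k l B + k - l)))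
    omega
  · have hmono : #(B ∩ Icc 1 (2 * pval k l B + k - l)) ≤
        #(B ∩ Icc 1 (2 * (pval k l B + 1) + k - l)) :=
      card_le_card (inter_subset_inter_left (Icc_subset_Icc_right (by omega)))
    have := le_pval hlt' (hlt.trans_le hmono)
    omega

end pval

section phi

variable {k l : ℕ} {B : Finset ℕ}

lemma card_phi (hB : #B = l) (hlk : l ≤ k) : #(phi k l B) = k := by
  have h := card_symmDiff_add_two_mul_card_inter B (Icc 1 (2 * pval k l B + k - l))
  rw [card_inter_pval hB, Nat.card_Icc] at h
  rw [phi]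
  omega

lemma eq_of_phi_eq_of_pval_le {B₁ B₂ : Finset ℕ} (hB₁ : #B₁ = l) (hB₂ : #B₂ = l) (hlk : l ≤ k)
    (hp : pval k l B₁ ≤ pval k l B₂) (h : phi k l B₁ = phi k l B₂) : B₁ = B₂ := by
  rcases hp.eq_or_lt with hp | hp
  · rw [phi, phi, hp] at h
    exact symmDiff_left_injective _ h
  exfalso
  set p₁ := pval k l B₁
  set p₂ := pval k l B₂
  set m₁ := 2 * p₁ + k - l
  set m₂ := 2 * p₂ + k - l
  have hm : m₁ ≤ m₂ := by omega
  have hcount₁ : #(B₁ ∩ Icc 1 m₁) = p₁ := card_inter_pval hB₁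
  have hcount₂ : #(B₂ ∩ Icc 1 m₂) = p₂ := card_inter_pval hB₂
  have hflip : B₂ = symmDiff B₁ (Ioc m₁ m₂) := by
    have hI : symmDiff (Icc 1 m₁) (Icc 1 m₂) = Ioc m₁ m₂ := by
      ext x
      simp only [mem_symmDiff, mem_Icc, mem_Ioc]
      omega
    rw [← hI, ← symmDiff_assoc, ← phi, h, phi, symmDiff_symmDiff_cancel_right]
  have hcount_flip : #(B₁ ∩ Icc 1 m₁) + #(Ioc m₁ m₂ \ B₁) = p₂ := by
    rw [← hcount₂, ← card_union_of_disjoint]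
    · congr 1
      ext x
      simp only [hflip, mem_union, mem_inter, mem_sdiff, mem_symmDiff, mem_Icc, mem_Ioc]
      grind
    · exact disjoint_left.mpr fun x hx hx' => by
        simp only [mem_inter, mem_sdiff, mem_Icc, mem_Ioc] at hx hx'; omega
  have hlt := card_inter_lt_of_pval_lt (pval_le k l B₂) hp
  rw [← card_inter_Icc_add_card_inter_Ioc B₁ hm] at hlt
  have hD := card_sdiff_add_card_inter (Ioc m₁ m₂) B₁
  rw [inter_comm, Nat.card_Ioc] at hD
  omega

lemma phi_injOn (hlk : l ≤ k) : Set.InjOn (phi k l) {B | #B = l} := by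
  intro B₁ hB₁ B₂ hB₂ h
  rcases le_total (pval k l B₁) (pval k l B₂) with hp | hp
  · exact eq_of_phi_eq_of_pval_le hB₁ hB₂ hlk hp h
  · exact (eq_of_phi_eq_of_pval_le hB₂ hB₁ hlk hp h.symm).symm

end phi

section shift

variable {k l : ℕ} {B : Finset ℕ}

lemma card_inter_Ioc_le_card_Ioc_sdiff (hB : #B = l) (hlk : l ≤ k) (u : ℕ) :
    #(B ∩ Ioc (2 * pval k l B + k - l) u) ≤ #(Ioc (2 * pval k l B + k - l) u \ B) := by
  set p := pval k l B
  set m := 2 * p + k - l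
  have hcount : #(B ∩ Icc 1 m) = p := card_inter_pval hB
  by_contra! hlt
  set j := #(B ∩ Ioc m u)
  have hD := card_sdiff_add_card_inter (Ioc m u) B
  rw [inter_comm, Nat.card_Ioc] at hD
  have hmu : m ≤ u := by omega
  have hsplit := card_inter_Icc_add_card_inter_Ioc B hmu
  have hle : p + j ≤ l := by
    have := card_le_card (inter_subset_left (s₁ := B) (s₂ := Icc 1 u))
    omega
  -- `[u] ⊆ [2(p + j) + k - l]` carries `p + j` points of `B`, against the maximality of `p`
  have hmono : #(B ∩ Icc 1 u) ≤ #(B ∩ Icc 1 (2 * (p + j) + k - l)) :=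
    card_le_card (inter_subset_inter_left (Icc_subset_Icc_right (by omega)))
  have := le_pval hle (le_trans (by omega) hmono)
  omega

lemma prec_inter_Icc_union_Ioc_sdiff (h0 : 0 ∉ B) (hB : #B = l) (hlk : l ≤ k) {s : ℕ}
    (hs : #(Ioc (2 * pval k l B + k - l) s \ B) = l - pval k l B) :
    prec ((B ∩ Icc 1 (2 * pval k l B + k - l)) ∪ (Ioc (2 * pval k l B + k - l) s \ B)) B := by
  set p := pval k l B
  set m := 2 * p + k - l
  have hcount : #(B ∩ Icc 1 m) = p := card_inter_pval hB
  have hdisj (a : ℕ) : Disjoint (B ∩ Icc 1 m) (Ioc m a \ B) :=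
    disjoint_left.mpr fun x hx hx' => by
      simp only [mem_inter, mem_sdiff, mem_Icc, mem_Ioc] at hx hx'
      omega
  apply prec_of_card_filter_le
  · rw [card_union_of_disjoint (hdisj s), hcount, hs, hB]
    have : p ≤ l := pval_le k l B
    omega
  intro t
  rcases le_or_gt t m with htm | hmt
  · refine card_le_card fun x hx => ?_
    have hx0 : x ≠ 0 := fun h => h0 (h ▸ (mem_filter.mp hx).1)
    simp only [mem_filter, mem_union, mem_inter, mem_Icc] at hx ⊢
    exact ⟨Or.inl ⟨hx.1, by omega, by omega⟩, hx.2⟩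
  have hB_le : {x ∈ B | x ≤ t} = B ∩ Icc 1 t := by
    ext x
    have : x ∈ B → x ≠ 0 := fun hx h => h0 (h ▸ hx)
    simp only [mem_filter, mem_inter, mem_Icc]
    grind
  have hB'_le : {x ∈ (B ∩ Icc 1 m) ∪ (Ioc m s \ B) | x ≤ t} =
      (B ∩ Icc 1 m) ∪ (Ioc m (min s t) \ B) := by
    ext x
    simp only [mem_filter, mem_union, mem_inter, mem_sdiff, mem_Icc, mem_Ioc]
    grind
  rw [hB_le, hB'_le, card_union_of_disjoint (hdisj _),
    ← card_inter_Icc_add_card_inter_Ioc B hmt.le]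
  refine Nat.add_le_add_left ?_ _
  rcases le_total t s with hts | hst
  · rw [min_eq_right hts]
    exact card_inter_Ioc_le_card_Ioc_sdiff hB hlk t
  · rw [min_eq_left hst, hs]
    have := card_inter_Icc_add_card_inter_Ioc B hmt.le
    have := card_le_card (inter_subset_left (s₁ := B) (s₂ := Icc 1 t))
    omega

lemma exists_prec_disjoint_phi {n : ℕ} (hBn : B ⊆ Icc 1 n) (hB : #B = l) (hlk : l ≤ k)
    (hn : k + l ≤ n) : ∃ B' ∈ (Icc 1 n).powersetCard l, prec B' B ∧ Disjoint B' (phi k l B) := by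
  set p := pval k l B
  set m := 2 * p + k - l
  have hp : p ≤ l := pval_le k l B
  have hmn : m ≤ n := by omega
  have hroom : l - p ≤ #(Ioc m n \ B) := by
    have hcount : #(B ∩ Icc 1 m) = p := card_inter_pval hB
    have hsplit := card_inter_Icc_add_card_inter_Ioc B hmn
    rw [inter_eq_left.mpr hBn, hB, hcount] at hsplit
    have hD := card_sdiff_add_card_inter (Ioc m n) B
    rw [inter_comm, Nat.card_Ioc] at hD
    omega
  obtain ⟨s, hsn, hs⟩ := exists_card_Ioc_sdiff_eq B hmn hroom
  have hprec := prec_inter_Icc_union_Ioc_sdiff (fun h => by simpa using hBn h) hB hlk hs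
  refine ⟨_, mem_powersetCard.mpr ⟨fun x hx => ?_, hprec.1.trans hB⟩, hprec, ?_⟩
  · simp only [mem_union, mem_inter, mem_sdiff, mem_Ioc] at hx
    rcases hx with ⟨hxB, -⟩ | ⟨hx, -⟩
    · exact hBn hxB
    · exact mem_Icc.mpr ⟨by omega, by omega⟩
  · refine disjoint_left.mpr fun x hx hx' => ?_
    simp only [phi, mem_symmDiff, mem_union, mem_inter, mem_sdiff, mem_Icc, mem_Ioc] at hx hx'
    grind

end shift

theorem stmt17_general (n k l : ℕ) (hlk : l ≤ k) (hn : k + l ≤ n)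
    (F G : Finset (Finset ℕ))
    (hG : G ⊆ (Finset.Icc 1 n).powersetCard l)
    (hsG : IsShifted n l G)
    (hcross : ∀ A ∈ F, ∀ B ∈ G, (A ∩ B).Nonempty) :
    (∀ B ∈ G, (phi k l B).card = k) ∧
    Set.InjOn (phi k l) ↑G ∧
    (∀ B ∈ G, phi k l B ∉ F) := by
  have hGcard : ∀ B ∈ G, #B = l := fun B hB => (mem_powersetCard.mp (hG hB)).2
  refine ⟨fun B hB => card_phi (hGcard B hB) hlk,
    (phi_injOn hlk).mono fun B hB => hGcard B hB, fun B hB hphi => ?_⟩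
  obtain ⟨B', hB', hprec, hdisj⟩ :=
    exists_prec_disjoint_phi (mem_powersetCard.mp (hG hB)).1 (hGcard B hB) hlk hn
  exact (hcross _ hphi B' (hsG B' hB' B hB hprec)).ne_empty
    (disjoint_iff_inter_eq_empty.mp hdisj.symm)

/-- Lemma 5.1 (i), (ii). -/
theorem stmt17 (n k l : ℕ) (hl : 2 ≤ l) (hlk : l ≤ k) (hn : k + l ≤ n)
    (F G : Finset (Finset ℕ))
    (hF : F ⊆ (Finset.Icc 1 n).powersetCard k)
    (hG : G ⊆ (Finset.Icc 1 n).powersetCard l)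
    (hsF : IsShifted n k F) (hsG : IsShifted n l G)
    (hcross : ∀ A ∈ F, ∀ B ∈ G, (A ∩ B).Nonempty)
    (hp : ∀ B ∈ G, 0 < pval k l B) :
    (∀ B ∈ G, (phi k l B).card = k) ∧
    Set.InjOn (phi k l) ↑G ∧
    (∀ B ∈ G, phi k l B ∉ F) :=
  stmt17_general n k l hlk hn F G hG hsG hcross
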